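/- Let G be a countable, infinite discrete group and let B ⊆ G be a small set. Then there exists a minimal subshift X ⊆ 2^G that shatters B, i.e., for every C ⊆ B there is x ∈ X with x(g) = 1 for g ∈ C and x(g) = 0 for g ∈ B \ C. -/

import Mathlib

open Pointwise

section Defs

variable (G : Type*) [Group G]

/-- The right-shift of `G` on `G → A`: `(g • z) h = z (h * g)`. -/
instance (priority := high) shiftSMul (A : Type*) : SMul G (G → A) :=
  ⟨fun g z h => z (h * g)⟩

/-- The right-shift action of `G` on `G → A` is a `G`-action (the Bernoulli flow when
`A = Bool`). -/
instance shiftMulAction (A : Type*) : MulAction G (G → A) where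
  one_smul z := funext fun h => by show z (h * 1) = z h; rw [mul_one]
  mul_smul g₁ g₂ z := funext fun h => by
    show z (h * (g₁ * g₂)) = z (h * g₁ * g₂)
    rw [mul_assoc]

/-- `S ⊆ G` is `D`-separated if `Dg ∩ Dh = ∅` for all distinct `g, h ∈ S`. -/
def DSeparated (D S : Set G) : Prop :=
  ∀ g ∈ S, ∀ h ∈ S, g ≠ h → Disjoint (D * ({g} : Set G)) (D * ({h} : Set G))

/-- The separated covering property for a `G`-flow `X`: for every finite `D ⊆ G`
and every nonempty open `U ⊆ X` there is a `D`-separated `S ⊆ G` with `S⁻¹U = X`. -/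
def SCP (X : Type*) [TopologicalSpace X] [MulAction G X] : Prop :=
  ∀ D : Set G, D.Finite → ∀ U : Set X, IsOpen U → U.Nonempty →
    ∃ S : Set G, DSeparated G D S ∧ ∀ x : X, ∃ s ∈ S, s • x ∈ U

/-- A `G`-flow is minimal if every orbit is dense. -/
def IsMinimalFlow (X : Type*) [TopologicalSpace X] [MulAction G X] : Prop :=
  ∀ x : X, Dense (MulAction.orbit G x)

/-- Two `G`-flows `X` and `Y` are disjoint if the only closed `G`-invariant subset of
`X × Y` projecting onto both factors is `X × Y` itself. -/
def FlowsDisjoint (X Y : Type*) [TopologicalSpace X] [TopologicalSpace Y]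
    [MulAction G X] [MulAction G Y] : Prop :=
  ∀ J : Set (X × Y), IsClosed J → (∀ (g : G), ∀ p ∈ J, g • p ∈ J) →
    Prod.fst '' J = Set.univ → Prod.snd '' J = Set.univ → J = Set.univ

end Defs

/-- A subset `S ⊆ G` is syndetic if `KS = G` for some finite `K ⊆ G`. -/
def Syndetic {G : Type*} [Group G] (S : Set G) : Prop :=
  ∃ K : Set G, K.Finite ∧ K * S = Set.univ

/-- A subset `B ⊆ G` is small if for every finite `F ⊆ G` the set
`{g : Fg ∩ B = ∅}` is syndetic. -/
def SmallSet {G : Type*} [Group G] (B : Set G) : Prop :=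
  ∀ F : Set G, F.Finite → Syndetic {g : G | ∀ f ∈ F, f * g ∉ B}

/-!
It suffices to build one `ω : G → Bool` in which every finite pattern on `B` (a pair of disjoint
finite `C₀, C₁ ⊆ B`) occurs syndetically: a minimal subsystem of the orbit closure of `ω` then
meets the cylinder of every such pattern, and by compactness it shatters `B`.

The patterns are enumerated and `ω` is the limit of stages. Stage `n` fixes `ω` on a finite window
`W n` and guarantees, for each `m < n`, that every point near `W n` is within a fixed finite
distance `Q m` of an occurrence of pattern `m` inside `W n`. To pass to stage `n + 1`, pattern `n`
is written once off `W n`, and then copies of the earlier windows `W (m + 1)` are pasted, scale by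
scale from the top down, until every point of a large finite region again sees pattern `m` within
`Q m`. A copy meant to serve a point `x` is placed at `k⁻¹ x`, with `k` from a finite set that
smallness of `B` provides, so that it misses the new pattern: either it meets what has been built,
and `x` is served through what it meets, or it can be pasted without conflict.
-/

open Set

section Dynamics

def cylinder {α : Type*} (C₀ C₁ : Set α) : Set (α → Bool) :=
  {z | (∀ e ∈ C₀, z e = true) ∧ ∀ e ∈ C₁, z e = false}

theorem isClosed_cylinder {α : Type*} (C₀ C₁ : Set α) : IsClosed (cylinder C₀ C₁) := by
  have hpt : ∀ (e : α) (b : Bool), IsClosed {z : α → Bool | z e = b} := fun e b =>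
    isClosed_singleton.preimage (continuous_apply e)
  simp only [cylinder, ofPred_and, ofPred_forall]
  exact (isClosed_biInter fun e _ => hpt e true).inter (isClosed_biInter fun e _ => hpt e false)

theorem inter_cylinder_nonempty {α : Type*} {X : Set (α → Bool)} (hX : IsClosed X)
    {C₀ C₁ : Set α}
    (h : ∀ D₀ ⊆ C₀, ∀ D₁ ⊆ C₁, D₀.Finite → D₁.Finite → (X ∩ cylinder D₀ D₁).Nonempty) :
    (X ∩ cylinder C₀ C₁).Nonempty := by
  have hcyl : cylinder C₀ C₁ = ⋂ e, cylinder (C₀ ∩ {e}) (C₁ ∩ {e}) := by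
    ext z
    simp only [cylinder, mem_iInter, mem_ofPred_eq, mem_inter_iff, mem_singleton_iff]
    exact ⟨fun hz e => ⟨fun a ha => hz.1 a ha.1, fun a ha => hz.2 a ha.1⟩,
      fun hz => ⟨fun a ha => (hz a).1 a ⟨ha, rfl⟩, fun a ha => (hz a).2 a ⟨ha, rfl⟩⟩⟩
  rw [hcyl]
  refine hX.isCompact.inter_iInter_nonempty _ (fun e => isClosed_cylinder _ _) fun u => ?_
  obtain ⟨z, hzX, h₀, h₁⟩ := h (C₀ ∩ u) inter_subset_left (C₁ ∩ u) inter_subset_left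
    (u.finite_toSet.inter_of_right _) (u.finite_toSet.inter_of_right _)
  refine ⟨z, hzX, mem_iInter₂.mpr fun e he => ⟨fun a ha => h₀ a ⟨ha.1, ?_⟩,
    fun a ha => h₁ a ⟨ha.1, ?_⟩⟩⟩ <;>
  · rw [mem_singleton_iff.mp ha.2]
    exact he

variable {G : Type*} [Group G]

theorem shift_apply {A : Type*} (g : G) (z : G → A) (h : G) : (g • z) h = z (h * g) := rfl

instance shiftContinuousConstSMul {A : Type*} [TopologicalSpace A] :
    ContinuousConstSMul G (G → A) :=
  ⟨fun g => continuous_pi fun h => continuous_apply (h * g)⟩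

theorem exists_inv_mul_mem_of_mul_eq_univ {K S : Set G} (h : K * S = univ) (z : G) :
    ∃ k ∈ K, k⁻¹ * z ∈ S := by
  obtain ⟨k, hk, g, hg, rfl⟩ : z ∈ K * S := h ▸ mem_univ z
  exact ⟨k, hk, by rwa [inv_mul_cancel_left]⟩

variable {α : Type*} [TopologicalSpace α] [MulAction G α] [ContinuousConstSMul G α]

theorem inter_nonempty_of_syndetic {a : α} {U X : Set α} (hU : IsClosed U)
    (hret : Syndetic {g : G | g • a ∈ U}) (hX : ∀ (g : G), ∀ x ∈ X, g • x ∈ X)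
    (hXa : X ⊆ closure (MulAction.orbit G a)) (hne : X.Nonempty) : (X ∩ U).Nonempty := by
  obtain ⟨K, hK, hKU⟩ := hret
  have horbit : MulAction.orbit G a ⊆ ⋃ k ∈ K, k • U := by
    rintro _ ⟨g, rfl⟩
    obtain ⟨k, hk, hkg⟩ := exists_inv_mul_mem_of_mul_eq_univ hKU g
    refine mem_biUnion hk ⟨_, hkg, ?_⟩
    simp [smul_smul]
  obtain ⟨x, hx⟩ := hne
  obtain ⟨k, hk, y, hyU, rfl⟩ := mem_iUnion₂.mp <| closure_minimal horbit
    (hK.isClosed_biUnion fun k _ => hU.smul k) (hXa hx)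
  exact ⟨y, by simpa using hX k⁻¹ _ hx, hyU⟩

theorem exists_minimal_invariant_subset [CompactSpace α] {Y : Set α} (hY : IsClosed Y)
    (hYinv : ∀ (g : G), ∀ y ∈ Y, g • y ∈ Y) (hne : Y.Nonempty) :
    ∃ X ⊆ Y, IsClosed X ∧ (∀ (g : G), ∀ x ∈ X, g • x ∈ X) ∧ X.Nonempty ∧
      ∀ x ∈ X, closure (MulAction.orbit G x) = X := by
  let S : Set (Set α) := {Z | IsClosed Z ∧ (∀ (g : G), ∀ z ∈ Z, g • z ∈ Z) ∧ Z.Nonempty}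
  have hchain : ∀ c ⊆ S, IsChain (· ⊆ ·) c → c.Nonempty → ∃ lb ∈ S, ∀ Z ∈ c, lb ⊆ Z := by
    intro c hc hchain hcne
    have : Nonempty c := hcne.to_subtype
    have hdir : DirectedOn (· ⊇ ·) c := fun a ha b hb => by
      rcases eq_or_ne a b with rfl | hab
      · exact ⟨a, ha, subset_rfl, subset_rfl⟩
      · exact (hchain ha hb hab).elim (fun h => ⟨a, ha, subset_rfl, h⟩)
          fun h => ⟨b, hb, h, subset_rfl⟩
    refine ⟨⋂₀ c, ⟨isClosed_sInter fun Z hZ => (hc hZ).1,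
      fun g x hx Z hZ => (hc hZ).2.1 g x (hx Z hZ), ?_⟩, fun Z hZ => sInter_subset_of_mem hZ⟩
    exact IsCompact.nonempty_sInter_of_directed_nonempty_isCompact_isClosed hdir
      (fun Z hZ => (hc hZ).2.2) (fun Z hZ => (hc hZ).1.isCompact) fun Z hZ => (hc hZ).1
  obtain ⟨X, hXY, hXmin⟩ := zorn_superset_nonempty S hchain Y ⟨hY, hYinv, hne⟩
  obtain ⟨hXcl, hXinv, hXne⟩ := hXmin.prop
  refine ⟨X, hXY, hXcl, hXinv, hXne, fun x hx => ?_⟩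
  have hsub : closure (MulAction.orbit G x) ⊆ X :=
    closure_minimal (by rintro _ ⟨g, rfl⟩; exact hXinv g x hx) hXcl
  refine hsub.antisymm (hXmin.2 ⟨isClosed_closure, fun g z hz => ?_, ?_⟩ hsub)
  · exact smul_closure_orbit_subset g x (smul_mem_smul_set hz)
  · exact ⟨x, subset_closure (MulAction.mem_orbit_self x)⟩

end Dynamics

namespace ShatteringConstruction

variable {G : Type*}

/-- `config` is final on `window n`; `escape m` is a finite `K` with
`K * {g | window (m + 1) * {g} ∩ B = ∅} = univ`, from smallness of `B`; pattern `m` is seen from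
every point near the window through the finite set `spread m`. Entries at indices beyond `n` are
junk. -/
structure Stage (G : Type*) where
  n : ℕ
  window : ℕ → Set G
  config : G → Bool
  escape : ℕ → Set G
  spread : ℕ → Set G

namespace Stage

structure IsPrefix (s t : Stage G) : Prop where
  n_le : s.n ≤ t.n
  window_eq : ∀ k ≤ s.n, t.window k = s.window k
  eqOn_config : EqOn t.config s.config (s.window s.n)
  spread_eq : ∀ m < s.n, t.spread m = s.spread m

theorem IsPrefix.refl (s : Stage G) : s.IsPrefix s :=
  ⟨le_rfl, fun _ _ => rfl, eqOn_refl _ _, fun _ _ => rfl⟩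

def init : Stage G := ⟨0, fun _ => ∅, fun _ => false, fun _ => ∅, fun _ => ∅⟩

def extend (s : Stage G) (W : Set G) (ω : G → Bool) (K Q : Set G) : Stage G where
  n := s.n + 1
  window t := if t ≤ s.n then s.window t else W
  config := ω
  escape := Function.update s.escape s.n K
  spread := Function.update s.spread s.n Q

section extend

variable {s : Stage G} {W : Set G} {ω : G → Bool} {K Q : Set G} {m : ℕ}

theorem extend_n : (s.extend W ω K Q).n = s.n + 1 := rfl

theorem extend_window_of_le (hm : m ≤ s.n) : (s.extend W ω K Q).window m = s.window m :=
  if_pos hm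

theorem extend_window_succ : (s.extend W ω K Q).window (s.n + 1) = W :=
  if_neg (Nat.not_succ_le_self s.n)

theorem extend_escape_of_lt (hm : m < s.n) : (s.extend W ω K Q).escape m = s.escape m :=
  Function.update_of_ne hm.ne _ _

theorem extend_escape_self : (s.extend W ω K Q).escape s.n = K :=
  Function.update_self _ _ _

theorem extend_spread_of_lt (hm : m < s.n) : (s.extend W ω K Q).spread m = s.spread m :=
  Function.update_of_ne hm.ne _ _

theorem extend_spread_self : (s.extend W ω K Q).spread s.n = Q :=
  Function.update_self _ _ _

theorem isPrefix_extend (hω : EqOn ω s.config (s.window s.n)) :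
    s.IsPrefix (s.extend W ω K Q) where
  n_le := Nat.le_succ s.n
  window_eq _ hk := extend_window_of_le hk
  eqOn_config := hω
  spread_eq _ hm := extend_spread_of_lt hm

end extend

end Stage

def Refines (V : Set G) (ω : G → Bool) (V' : Set G) (ω' : G → Bool) : Prop :=
  V ⊆ V' ∧ EqOn ω' ω V

theorem Refines.trans {V V' V'' : Set G} {ω ω' ω'' : G → Bool} (h : Refines V ω V' ω')
    (h' : Refines V' ω' V'' ω'') : Refines V ω V'' ω'' :=
  ⟨h.1.trans h'.1, fun _ hy => (h'.2 (h.1 hy)).trans (h.2 hy)⟩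

variable [Group G]

def OccursNear (ω : G → Bool) (V Q C₀ C₁ : Set G) (x : G) : Prop :=
  ∃ d, x * d⁻¹ ∈ Q ∧ (C₀ ∪ C₁) * {d} ⊆ V ∧ d • ω ∈ cylinder C₀ C₁

theorem OccursNear.mono {σ ω : G → Bool} {W V Q C₀ C₁ : Set G} {x : G}
    (h : OccursNear σ W Q C₀ C₁ x) (hV : W ⊆ V) (hω : EqOn ω σ W) :
    OccursNear ω V Q C₀ C₁ x := by
  obtain ⟨d, hdQ, hdW, h₀, h₁⟩ := h
  have hω' : ∀ e ∈ C₀ ∪ C₁, ω (e * d) = σ (e * d) := fun e he => hω (hdW (mul_mem_mul he rfl))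
  exact ⟨d, hdQ, hdW.trans hV, fun e he => (hω' e (.inl he)).trans (h₀ e he),
    fun e he => (hω' e (.inr he)).trans (h₁ e he)⟩

theorem OccursNear.refines {ω ω' : G → Bool} {V V' Q C₀ C₁ : Set G} {x : G}
    (h : OccursNear ω V Q C₀ C₁ x) (hR : Refines V ω V' ω') : OccursNear ω' V' Q C₀ C₁ x :=
  h.mono hR.1 hR.2

theorem OccursNear.translate {σ ω : G → Bool} {W V Q C₀ C₁ : Set G} {x u : G}
    (h : OccursNear σ W Q C₀ C₁ x) (hV : W * {u} ⊆ V)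
    (hω : ∀ z ∈ W * {u}, ω z = σ (z * u⁻¹)) : OccursNear ω V Q C₀ C₁ (x * u) := by
  obtain ⟨d, hdQ, hdW, h₀, h₁⟩ := h
  have hmem : ∀ e ∈ C₀ ∪ C₁, e * (d * u) ∈ W * {u} := fun e he =>
    ⟨e * d, hdW (mul_mem_mul he rfl), u, rfl, mul_assoc e d u⟩
  have hω' : ∀ e ∈ C₀ ∪ C₁, ω (e * (d * u)) = σ (e * d) := fun e he => by
    rw [hω _ (hmem e he), ← mul_assoc, mul_inv_cancel_right]
  refine ⟨d * u, by rwa [mul_inv_rev, ← mul_assoc, mul_inv_cancel_right], ?_,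
    fun e he => (hω' e (.inl he)).trans (h₀ e he), fun e he => (hω' e (.inr he)).trans (h₁ e he)⟩
  rintro _ ⟨e, he, _, rfl, rfl⟩
  exact hV (hmem e he)

theorem disjoint_mul_singleton {B E W : Set G} (hE : E ⊆ B) {g c : G}
    (h : ∀ f ∈ W, f * (g * c⁻¹) ∉ B) : Disjoint (W * {g}) (E * {c}) := by
  rw [disjoint_left]
  rintro _ ⟨f, hf, _, rfl, rfl⟩ ⟨e, he, _, rfl, hfe⟩
  simp only at hfe
  apply h f hf
  rw [← mul_assoc, ← hfe, mul_inv_cancel_right]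
  exact hE he

/-- `Z m` will be the region served at scale `m`: the last condition says that a copy pasted
from `Z j` at a lower scale `j` is seen from scale `m` only inside `Z m`. -/
theorem exists_zones {n : ℕ} {P A : ℕ → Set G} {Γ : Set G} (hP : ∀ m < n, (P m).Finite)
    (hA : ∀ j < n, (A j).Finite) (hΓ : Γ.Finite) :
    ∃ Z : ℕ → Set G, (∀ m < n, (Z m).Finite) ∧ (∀ m < n, P m * Γ ⊆ Z m) ∧
      ∀ j m, j < m → m < n → P m * (A j * Z j) ⊆ Z m := by
  set U : Set G := insert 1 (⋃ j ∈ Iio n, P j ∪ A j)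
  have hU : U.Finite := ((finite_Iio n).biUnion fun j hj => (hP j hj).union (hA j hj)).insert 1
  have hU₁ : (1 : G) ∈ U := mem_insert 1 _
  have hPAU : ∀ j < n, P j ∪ A j ⊆ U := fun j hj =>
    (subset_biUnion_of_mem (u := fun j => P j ∪ A j) (mem_Iio.mpr hj)).trans (subset_insert 1 _)
  have hpow : ∀ k, (U ^ k).Finite := fun k => by
    induction k with
    | zero => simp
    | succ k ih => rw [pow_succ]; exact ih.mul hU
  refine ⟨fun m => U ^ (2 * m + 1) * Γ, fun m _ => (hpow _).mul hΓ, fun m hm => ?_,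
    fun j m hjm hm => ?_⟩
  · refine mul_subset_mul_right ((subset_union_left.trans (hPAU m hm)).trans ?_)
    simpa using pow_subset_pow_right hU₁ (Nat.le_add_left 1 (2 * m))
  · calc P m * (A j * (U ^ (2 * j + 1) * Γ)) ⊆ U * (U * (U ^ (2 * j + 1) * Γ)) :=
          mul_subset_mul (subset_union_left.trans (hPAU m hm))
            (mul_subset_mul_right (subset_union_right.trans (hPAU j (hjm.trans hm))))
      _ = U ^ (2 + (2 * j + 1)) * Γ := by rw [pow_add U 2, sq, mul_assoc, mul_assoc]
      _ ⊆ U ^ (2 * m + 1) * Γ := mul_subset_mul_right (pow_subset_pow_right hU₁ (by omega))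

namespace Stage

/-- `x ∈ s.reach m * s.window t` means that `x` lies in `window t`, or that a copy of
`window (m + 1)` placed at `k⁻¹ * x` with `k ∈ escape m` meets `window t`. -/
def reach (s : Stage G) (m : ℕ) : Set G := insert 1 (s.escape m * (s.window (m + 1))⁻¹)

theorem mul_mem_reach_mul {s : Stage G} {m : ℕ} {k f : G} (hk : k ∈ s.escape m)
    (hf : f ∈ s.window (m + 1)) (u : G) : k * u ∈ s.reach m * {f * u} :=
  ⟨k * f⁻¹, mem_insert_of_mem 1 (mul_mem_mul hk (inv_mem_inv.mpr hf)), f * u, rfl, by group⟩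

def IsCopy (s : Stage G) (t : ℕ) (u : G) (V : Set G) (ω : G → Bool) : Prop :=
  s.window t * {u} ⊆ V ∧ ∀ z ∈ s.window t * {u}, ω z = s.config (z * u⁻¹)

theorem IsCopy.mono {s : Stage G} {t : ℕ} {u : G} {V V' : Set G} {ω ω' : G → Bool}
    (h : s.IsCopy t u V ω) (hV : V ⊆ V') (hω : EqOn ω' ω V) : s.IsCopy t u V' ω' :=
  ⟨h.1.trans hV, fun z hz => (hω (h.1 hz)).trans (h.2 z hz)⟩

structure Valid (B : Set G) (C0 C1 : ℕ → Set G) (s : Stage G) : Prop where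
  window_subset : ∀ t ≤ s.n, s.window t ⊆ s.window s.n
  finite_window : (s.window s.n).Finite
  one_mem : ∀ m < s.n, (1 : G) ∈ s.window (m + 1)
  finite_escape : ∀ m < s.n, (s.escape m).Finite
  escape_mul : ∀ m < s.n, s.escape m * {g | ∀ f ∈ s.window (m + 1), f * g ∉ B} = univ
  finite_spread : ∀ m < s.n, (s.spread m).Finite
  occursNear : ∀ m t, m < t → t ≤ s.n → ∀ x ∈ s.reach m * s.window t,
    OccursNear s.config (s.window t) (s.spread m) (C0 m) (C1 m) x

variable {B : Set G} {C0 C1 : ℕ → Set G} {s : Stage G}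

theorem Valid.finite_reach (hs : s.Valid B C0 C1) {m : ℕ} (hm : m < s.n) : (s.reach m).Finite :=
  ((hs.finite_escape m hm).mul
    ((hs.finite_window.subset (hs.window_subset (m + 1) hm)).inv)).insert 1

theorem Valid.occursNear_of_copy (hs : s.Valid B C0 C1) {m t : ℕ} (hmt : m < t) (ht : t ≤ s.n)
    {V : Set G} {ω : G → Bool} {u y x : G} (hcopy : s.IsCopy t u V ω)
    (hy : y ∈ s.window t * {u}) (hx : x ∈ s.reach m * {y}) :
    OccursNear ω V (s.spread m) (C0 m) (C1 m) x := by
  obtain ⟨f, hf, _, rfl, rfl⟩ := hy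
  obtain ⟨r, hr, _, rfl, rfl⟩ := hx
  have h := (hs.occursNear m t hmt ht (r * f) (mul_mem_mul hr hf)).translate hcopy.1 hcopy.2
  rwa [mul_assoc] at h

theorem IsPrefix.trans {t u : Stage G} (hst : s.IsPrefix t) (htu : t.IsPrefix u)
    (ht : t.Valid B C0 C1) : s.IsPrefix u where
  n_le := hst.n_le.trans htu.n_le
  window_eq k hk := (htu.window_eq k (hk.trans hst.n_le)).trans (hst.window_eq k hk)
  eqOn_config x hx := by
    have hxt : x ∈ t.window t.n := ht.window_subset s.n hst.n_le (hst.window_eq s.n le_rfl ▸ hx)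
    exact (htu.eqOn_config hxt).trans (hst.eqOn_config hx)
  spread_eq m hm := (htu.spread_eq m (hm.trans_le hst.n_le)).trans (hst.spread_eq m hm)

theorem valid_init : (init : Stage G).Valid B C0 C1 where
  window_subset _ _ := subset_rfl
  finite_window := finite_empty
  one_mem _ h := absurd h (Nat.not_lt_zero _)
  finite_escape _ h := absurd h (Nat.not_lt_zero _)
  escape_mul _ h := absurd h (Nat.not_lt_zero _)
  finite_spread _ h := absurd h (Nat.not_lt_zero _)
  occursNear _ _ h ht := absurd (h.trans_le ht) (Nat.not_lt_zero _)

section extend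

variable {W : Set G} {ω : G → Bool} {K Q : Set G}

theorem extend_reach_of_lt {m : ℕ} (hm : m < s.n) : (s.extend W ω K Q).reach m = s.reach m := by
  rw [reach, reach, extend_escape_of_lt hm, extend_window_of_le hm]

theorem extend_reach_self : (s.extend W ω K Q).reach s.n = insert 1 (K * W⁻¹) := by
  rw [reach, extend_escape_self, extend_window_succ]

theorem Valid.extend (hs : s.Valid B C0 C1) (hW : s.window s.n ⊆ W) (hWfin : W.Finite)
    (h1 : (1 : G) ∈ W) (hω : EqOn ω s.config (s.window s.n)) (hK : K.Finite)
    (hKW : K * {g | ∀ f ∈ W, f * g ∉ B} = univ) (hQ : Q.Finite)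
    (hnew : ∀ x ∈ insert 1 (K * W⁻¹) * W, OccursNear ω W Q (C0 s.n) (C1 s.n) x)
    (hold : ∀ m < s.n, ∀ x ∈ s.reach m * W, OccursNear ω W (s.spread m) (C0 m) (C1 m) x) :
    (s.extend W ω K Q).Valid B C0 C1 where
  window_subset t ht := by
    rw [extend_n, extend_window_succ]
    rcases Nat.le_succ_iff.mp ht with h | rfl
    · rw [extend_window_of_le h]
      exact (hs.window_subset t h).trans hW
    · rw [extend_window_succ]
  finite_window := by rwa [extend_n, extend_window_succ]
  one_mem m hm := by
    rcases Nat.lt_succ_iff_lt_or_eq.mp hm with h | rfl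
    · rw [extend_window_of_le h]
      exact hs.one_mem m h
    · rwa [extend_window_succ]
  finite_escape m hm := by
    rcases Nat.lt_succ_iff_lt_or_eq.mp hm with h | rfl
    · rw [extend_escape_of_lt h]
      exact hs.finite_escape m h
    · rwa [extend_escape_self]
  escape_mul m hm := by
    rcases Nat.lt_succ_iff_lt_or_eq.mp hm with h | rfl
    · rw [extend_escape_of_lt h, extend_window_of_le h]
      exact hs.escape_mul m h
    · rwa [extend_escape_self, extend_window_succ]
  finite_spread m hm := by
    rcases Nat.lt_succ_iff_lt_or_eq.mp hm with h | rfl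
    · rw [extend_spread_of_lt h]
      exact hs.finite_spread m h
    · rwa [extend_spread_self]
  occursNear m t hmt ht x hx := by
    rcases Nat.le_succ_iff.mp ht with h | rfl
    · have hm : m < s.n := hmt.trans_le h
      rw [extend_window_of_le h, extend_reach_of_lt hm] at hx
      rw [extend_window_of_le h, extend_spread_of_lt hm]
      exact (hs.occursNear m t hmt h x hx).mono subset_rfl (hω.mono (hs.window_subset t h))
    · rw [extend_window_succ] at hx ⊢
      rcases Nat.lt_succ_iff_lt_or_eq.mp hmt with hm | rfl
      · rw [extend_reach_of_lt hm] at hx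
        rw [extend_spread_of_lt hm]
        exact hold m hm x hx
      · rw [extend_reach_self] at hx
        rw [extend_spread_self]
        exact hnew x hx

end extend

end Stage

open Stage

/-- A configuration in the making between stage `s` and the next one; `m` bounds from below the
scales of the copies pasted so far. -/
structure Layout (s : Stage G) (C₀ C₁ : Set G) (c : G) (Z : ℕ → Set G) (m : ℕ) (V : Set G)
    (ω : G → Bool) : Prop where
  finite : V.Finite
  window_subset : s.window s.n ⊆ V
  eqOn_window : EqOn ω s.config (s.window s.n)
  patch_subset : (C₀ ∪ C₁) * {c} ⊆ V
  patch : c • ω ∈ cylinder C₀ C₁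
  mem_cases : ∀ y ∈ V, y ∈ s.window s.n ∨ y ∈ (C₀ ∪ C₁) * {c} ∨
    ∃ j u, m ≤ j ∧ j < s.n ∧ u ∈ (s.escape j)⁻¹ * Z j ∧ y ∈ s.window (j + 1) * {u} ∧
      s.IsCopy (j + 1) u V ω

namespace Layout

variable {B : Set G} {C0 C1 : ℕ → Set G} {s : Stage G} {C₀ C₁ : Set G} {c : G}
  {Z : ℕ → Set G} {m : ℕ} {V : Set G} {ω : G → Bool}

theorem isCopy_window (hL : Layout s C₀ C₁ c Z m V ω) : s.IsCopy s.n 1 V ω :=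
  ⟨by simpa using hL.window_subset, fun z hz => by
    rw [inv_one, mul_one]; exact hL.eqOn_window (by simpa using hz)⟩

theorem init (hdisj : Disjoint C₀ C₁) (hc : Disjoint ((C₀ ∪ C₁) * {c}) (s.window s.n))
    (hW : (s.window s.n).Finite) (hE : (C₀ ∪ C₁).Finite) :
    ∃ ω, Layout s C₀ C₁ c Z s.n (s.window s.n ∪ (C₀ ∪ C₁) * {c}) ω := by
  classical
  have hpatch : ∀ e ∈ C₀ ∪ C₁, e * c ∈ (C₀ ∪ C₁) * {c} := fun e he => mul_mem_mul he rfl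
  refine ⟨((C₀ ∪ C₁) * {c}).piecewise (fun y => decide (y * c⁻¹ ∈ C₀)) s.config,
    hW.union (hE.mul (finite_singleton c)), subset_union_left,
    fun y hy => piecewise_eq_of_notMem _ _ _ (disjoint_right.mp hc hy), subset_union_right,
    ⟨fun e he => ?_, fun e he => ?_⟩, fun y hy => hy.elim .inl (.inr ∘ .inl)⟩
  · rw [shift_apply, piecewise_eq_of_mem _ _ _ (hpatch e (.inl he))]
    simpa using he
  · rw [shift_apply, piecewise_eq_of_mem _ _ _ (hpatch e (.inr he))]
    simpa using disjoint_right.mp hdisj he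

theorem mono (hL : Layout s C₀ C₁ c Z m V ω) {m' : ℕ} (hm : m' ≤ m) :
    Layout s C₀ C₁ c Z m' V ω :=
  { hL with
    mem_cases := fun y hy => (hL.mem_cases y hy).imp_right <| Or.imp_right
      fun ⟨j, u, hmj, h⟩ => ⟨j, u, hm.trans hmj, h⟩ }

theorem place (hL : Layout s C₀ C₁ c Z m V ω) (hm : m < s.n) {u : G}
    (hu : u ∈ (s.escape m)⁻¹ * Z m) (hfin : (s.window (m + 1)).Finite)
    (hdisj : Disjoint (s.window (m + 1) * {u}) V) :
    ∃ V' ω', Layout s C₀ C₁ c Z m V' ω' ∧ Refines V ω V' ω' ∧ s.IsCopy (m + 1) u V' ω' := by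
  classical
  set D := s.window (m + 1) * {u}
  set ω' := D.piecewise (fun z => s.config (z * u⁻¹)) ω
  have hR : Refines V ω (V ∪ D) ω' :=
    ⟨subset_union_left, fun y hy => piecewise_eq_of_notMem _ _ _ (disjoint_right.mp hdisj hy)⟩
  have hcopy : s.IsCopy (m + 1) u (V ∪ D) ω' :=
    ⟨subset_union_right, fun z hz => piecewise_eq_of_mem _ _ _ hz⟩
  refine ⟨V ∪ D, ω', ⟨hL.finite.union (hfin.mul (finite_singleton u)),
    hL.window_subset.trans hR.1, fun y hy => (hR.2 (hL.window_subset hy)).trans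
      (hL.eqOn_window hy), hL.patch_subset.trans hR.1, ?_, ?_⟩, hR, hcopy⟩
  · refine ⟨fun e he => ?_, fun e he => ?_⟩ <;>
      rw [shift_apply, hR.2 (hL.patch_subset (mul_mem_mul (by simp [he]) rfl))]
    exacts [hL.patch.1 e he, hL.patch.2 e he]
  · rintro y (hy | hy)
    · exact (hL.mem_cases y hy).imp_right <| Or.imp_right
        fun ⟨j, u', hmj, hj, hu', hy, hc⟩ => ⟨j, u', hmj, hj, hu', hy, hc.mono hR.1 hR.2⟩
    · exact .inr <| .inr ⟨m, u, le_rfl, hm, hu, hy, hcopy⟩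

/-- By the choice of `k`, the copy of `window (m + 1)` at `k⁻¹ * x` misses the new pattern: either
it meets the layout and `x` is served through what it meets, or it is pasted. -/
theorem exists_occursNear (hs : s.Valid B C0 C1) (hE : C₀ ∪ C₁ ⊆ B)
    (hL : Layout s C₀ C₁ c Z m V ω) (hm : m < s.n) {x : G} (hx : x ∈ Z m) :
    ∃ V' ω', Layout s C₀ C₁ c Z m V' ω' ∧ Refines V ω V' ω' ∧
      OccursNear ω' V' (s.spread m) (C0 m) (C1 m) x := by
  obtain ⟨k, hk, hkB⟩ := exists_inv_mul_mem_of_mul_eq_univ (hs.escape_mul m hm) (x * c⁻¹)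
  set u := k⁻¹ * x
  have hxu : ∀ f ∈ s.window (m + 1), x ∈ s.reach m * {f * u} := fun f hf => by
    simpa [u] using mul_mem_reach_mul hk hf u
  by_cases hmeet : ∃ y ∈ s.window (m + 1) * {u}, y ∈ V
  · obtain ⟨y, ⟨f, hf, _, rfl, rfl⟩, hyV⟩ := hmeet
    refine ⟨V, ω, hL, ⟨subset_rfl, eqOn_refl _ _⟩, ?_⟩
    rcases hL.mem_cases _ hyV with hyW | hyE | ⟨j, u', hmj, hj, -, hy, hcopy⟩
    · exact hs.occursNear_of_copy hm le_rfl hL.isCopy_window (by simpa using hyW) (hxu f hf)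
    · refine absurd hyE (disjoint_left.mp (disjoint_mul_singleton hE fun f hf => ?_)
        (mul_mem_mul hf rfl))
      simpa [u, mul_assoc] using hkB f hf
    · exact hs.occursNear_of_copy (Nat.lt_succ_of_le hmj) hj hcopy hy (hxu f hf)
  · obtain ⟨V', ω', hL', hR, hcopy⟩ := hL.place hm (mul_mem_mul (inv_mem_inv.mpr hk) hx)
      (hs.finite_window.subset (hs.window_subset (m + 1) hm))
      (disjoint_left.mpr fun y hy hyV => hmeet ⟨y, hy, hyV⟩)
    refine ⟨V', ω', hL', hR, hs.occursNear_of_copy (Nat.lt_succ_self m) hm hcopy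
      (mul_mem_mul (hs.one_mem m hm) rfl) (hxu 1 (hs.one_mem m hm))⟩

theorem exists_occursNear_of_finite (hs : s.Valid B C0 C1) (hE : C₀ ∪ C₁ ⊆ B) (hm : m < s.n)
    {T : Set G} (hT : T.Finite) (hTZ : T ⊆ Z m) (hL : Layout s C₀ C₁ c Z m V ω) :
    ∃ V' ω', Layout s C₀ C₁ c Z m V' ω' ∧ Refines V ω V' ω' ∧
      ∀ x ∈ T, OccursNear ω' V' (s.spread m) (C0 m) (C1 m) x := by
  induction T, hT using Set.Finite.induction_on generalizing V ω with
  | empty => exact ⟨V, ω, hL, ⟨subset_rfl, eqOn_refl _ _⟩, fun x hx => absurd hx (notMem_empty x)⟩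
  | @insert x T _ _ ih =>
    obtain ⟨V₁, ω₁, hL₁, hR₁, hT₁⟩ := ih ((subset_insert x T).trans hTZ) hL
    obtain ⟨V₂, ω₂, hL₂, hR₂, hx₂⟩ := hL₁.exists_occursNear hs hE hm (hTZ (mem_insert x T))
    exact ⟨V₂, ω₂, hL₂, hR₁.trans hR₂,
      forall_mem_insert.mpr ⟨hx₂, fun y hy => (hT₁ y hy).refines hR₂⟩⟩

/-- Scales are served from the top down, so that every copy met at scale `m` has scale `≥ m`
and carries the invariant of its window. -/
theorem exists_occursNear_zones (hs : s.Valid B C0 C1) (hE : C₀ ∪ C₁ ⊆ B)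
    (hZ : ∀ m < s.n, (Z m).Finite) (hL : Layout s C₀ C₁ c Z s.n V ω) :
    ∃ V' ω', Layout s C₀ C₁ c Z 0 V' ω' ∧
      ∀ m < s.n, ∀ x ∈ Z m, OccursNear ω' V' (s.spread m) (C0 m) (C1 m) x := by
  suffices h : ∀ k ≤ s.n, ∃ V' ω', Layout s C₀ C₁ c Z k V' ω' ∧
      ∀ m, k ≤ m → m < s.n → ∀ x ∈ Z m, OccursNear ω' V' (s.spread m) (C0 m) (C1 m) x by
    obtain ⟨V', ω', hL', hcov⟩ := h 0 (Nat.zero_le _)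
    exact ⟨V', ω', hL', fun m hm => hcov m (Nat.zero_le m) hm⟩
  intro k hk
  induction hk using Nat.decreasingInduction with
  | self => exact ⟨V, ω, hL, fun m hm hm' => absurd hm' (not_lt.mpr hm)⟩
  | of_succ k hk ih =>
    obtain ⟨V₁, ω₁, hL₁, hcov₁⟩ := ih
    obtain ⟨V₂, ω₂, hL₂, hR₂, hcov₂⟩ :=
      (hL₁.mono k.le_succ).exists_occursNear_of_finite hs hE hk (hZ k hk) subset_rfl
    refine ⟨V₂, ω₂, hL₂, fun m hkm hm x hx => ?_⟩
    rcases hkm.eq_or_lt with rfl | hkm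
    · exact hcov₂ x hx
    · exact (hcov₁ m hkm hm x hx).refines hR₂

theorem occursNear_of_mem_reach (hs : s.Valid B C0 C1) (hL : Layout s C₀ C₁ c Z 0 V ω)
    (hcov : ∀ m < s.n, ∀ x ∈ Z m, OccursNear ω V (s.spread m) (C0 m) (C1 m) x) {F : Set G}
    (hZ₁ : ∀ m < s.n, s.reach m * ((C₀ ∪ C₁) * {c} ∪ F) ⊆ Z m)
    (hZ₂ : ∀ j m, j < m → m < s.n →
      s.reach m * (s.window (j + 1) * (s.escape j)⁻¹ * Z j) ⊆ Z m)
    (hm : m < s.n) {x : G} (hx : x ∈ s.reach m * (V ∪ F)) :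
    OccursNear ω V (s.spread m) (C0 m) (C1 m) x := by
  obtain ⟨r, hr, y, hy, rfl⟩ := hx
  have hry : r * y ∈ s.reach m * {y} := mul_mem_mul hr rfl
  rcases hy with hyV | hyF
  · rcases hL.mem_cases y hyV with hyW | hyE | ⟨j, u, -, hj, hu, hyu, hcopy⟩
    · exact hs.occursNear_of_copy hm le_rfl hL.isCopy_window (by simpa using hyW) hry
    · exact hcov m hm _ (hZ₁ m hm (mul_mem_mul hr (.inl hyE)))
    · by_cases hjm : j < m
      · refine hcov m hm _ (hZ₂ j m hjm hm (mul_mem_mul hr ?_))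
        obtain ⟨f, hf, _, rfl, rfl⟩ := hyu
        rw [mul_assoc]
        exact mul_mem_mul hf hu
      · exact hs.occursNear_of_copy (by omega) hj hcopy hyu hry
  · exact hcov m hm _ (hZ₁ m hm (mul_mem_mul hr (.inr hyF)))

end Layout

namespace Stage

variable {B : Set G} {C0 C1 : ℕ → Set G} {s : Stage G}

theorem Valid.exists_succ (hB : SmallSet B) (hfin : ∀ m, (C0 m ∪ C1 m).Finite)
    (hsub : ∀ m, C0 m ∪ C1 m ⊆ B) (hdisj : ∀ m, Disjoint (C0 m) (C1 m))
    (hs : s.Valid B C0 C1) (a : G) :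
    ∃ t : Stage G, t.Valid B C0 C1 ∧ s.IsPrefix t ∧ t.n = s.n + 1 ∧ a ∈ t.window t.n := by
  have hwin : ∀ j < s.n, (s.window (j + 1)).Finite := fun j hj =>
    hs.finite_window.subset (hs.window_subset (j + 1) hj)
  obtain ⟨c, hc⟩ : ∃ c, Disjoint ((C0 s.n ∪ C1 s.n) * {c}) (s.window s.n) := by
    obtain ⟨K, -, hK⟩ := hB _ hs.finite_window
    obtain ⟨-, -, g, hg, -⟩ : (1 : G) ∈ K * _ := hK ▸ mem_univ 1
    refine ⟨g⁻¹, ?_⟩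
    simpa using (disjoint_mul_singleton (hsub s.n) (g := 1) (c := g⁻¹) fun f hf => by
      simpa using hg f hf).symm
  obtain ⟨Z, hZfin, hZ₁, hZ₂⟩ := exists_zones (n := s.n) (P := s.reach)
    (A := fun j => s.window (j + 1) * (s.escape j)⁻¹) (Γ := (C0 s.n ∪ C1 s.n) * {c} ∪ {1, a})
    (fun m hm => hs.finite_reach hm) (fun j hj => (hwin j hj).mul (hs.finite_escape j hj).inv)
    (((hfin s.n).mul (finite_singleton c)).union ((finite_singleton a).insert 1))
  obtain ⟨ω₀, hL₀⟩ := Layout.init (Z := Z) (hdisj s.n) hc hs.finite_window (hfin s.n)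
  obtain ⟨V, ω, hL, hcov⟩ := hL₀.exists_occursNear_zones hs (hsub s.n) hZfin
  set W := V ∪ {1, a}
  have hWfin : W.Finite := hL.finite.union ((finite_singleton a).insert 1)
  obtain ⟨K, hK, hKW⟩ := hB W hWfin
  refine ⟨s.extend W ω K (insert 1 (K * W⁻¹) * W * {c⁻¹}),
    hs.extend (hL.window_subset.trans subset_union_left) hWfin (.inr (mem_insert 1 _))
      hL.eqOn_window hK hKW ((((hK.mul hWfin.inv).insert 1).mul hWfin).mul (finite_singleton _))
      (fun x hx => ⟨c, mul_mem_mul hx rfl, hL.patch_subset.trans subset_union_left, hL.patch⟩)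
      (fun m hm x hx => (hL.occursNear_of_mem_reach hs hcov hZ₁ hZ₂ hm hx).mono
        subset_union_left (eqOn_refl _ _)),
    isPrefix_extend hL.eqOn_window, rfl, ?_⟩
  rw [extend_n, extend_window_succ]
  exact .inr (mem_insert_of_mem 1 rfl)

theorem exists_syndetic_of_seq {seq : ℕ → Stage G} (hvalid : ∀ T, (seq T).Valid B C0 C1)
    (hn : ∀ T, (seq T).n = T) (hprefix : ∀ T, (seq T).IsPrefix (seq (T + 1)))
    (hexh : ∀ x, ∃ T, x ∈ (seq T).window T) :
    ∃ ω : G → Bool, ∀ m, Syndetic {g : G | g • ω ∈ cylinder (C0 m) (C1 m)} := by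
  have hprefix' : ∀ T T', T ≤ T' → (seq T).IsPrefix (seq T') := fun T T' h => by
    induction h with
    | refl => exact IsPrefix.refl _
    | step _ ih => exact ih.trans (hprefix _) (hvalid _)
  have hwin : ∀ T T', T ≤ T' → (seq T).window T ⊆ (seq T').window T' := fun T T' h => by
    rw [← (hprefix' T T' h).window_eq T (hn T).ge]
    simpa only [hn] using (hvalid T').window_subset T ((hn T').symm ▸ h)
  choose N hN using hexh
  have hω : ∀ T, EqOn (fun x => (seq (N x)).config x) (seq T).config ((seq T).window T) :=
    fun T x hx => by
      have h₁ := (hprefix' T (max T (N x)) (le_max_left _ _)).eqOn_config (by rwa [hn])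
      have h₂ := (hprefix' (N x) (max T (N x)) (le_max_right _ _)).eqOn_config
        (by rw [hn]; exact hN x)
      exact h₂.symm.trans h₁
  refine ⟨fun x => (seq (N x)).config x, fun m => ⟨(seq (m + 1)).spread m,
    (hvalid (m + 1)).finite_spread m (by rw [hn]; omega), eq_univ_of_forall fun x => ?_⟩⟩
  set T := max (m + 1) (N x)
  obtain ⟨d, hdQ, -, hd⟩ := ((hvalid T).occursNear m T (by omega) (hn T).ge x
    ⟨1, mem_insert 1 _, x, hwin _ T (le_max_right _ _) (hN x), one_mul x⟩).mono subset_rfl (hω T)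
  rw [(hprefix' (m + 1) T (le_max_left _ _)).spread_eq m (by rw [hn]; omega)] at hdQ
  exact ⟨x * d⁻¹, hdQ, d, hd, inv_mul_cancel_right x d⟩

end Stage

end ShatteringConstruction

open ShatteringConstruction Stage in
theorem SmallSet.exists_syndetic_occurrences_seq {G : Type*} [Group G] [Countable G] {B : Set G}
    (hB : SmallSet B) {C0 C1 : ℕ → Set G} (hfin : ∀ m, (C0 m ∪ C1 m).Finite)
    (hsub : ∀ m, C0 m ∪ C1 m ⊆ B) (hdisj : ∀ m, Disjoint (C0 m) (C1 m)) :
    ∃ ω : G → Bool, ∀ m, Syndetic {g : G | g • ω ∈ cylinder (C0 m) (C1 m)} := by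
  obtain ⟨γ, hγ⟩ := exists_surjective_nat G
  have hstep : ∀ (s : Stage G) (a : G), ∃ t : Stage G, s.Valid B C0 C1 →
      t.Valid B C0 C1 ∧ s.IsPrefix t ∧ t.n = s.n + 1 ∧ a ∈ t.window t.n := fun s a => by
    by_cases hs : s.Valid B C0 C1
    · exact (hs.exists_succ hB hfin hsub hdisj a).imp fun _ h _ => h
    · exact ⟨s, fun h => absurd h hs⟩
  choose next hnext using hstep
  obtain ⟨seq, hseq₀, hseq⟩ : ∃ seq : ℕ → Stage G, seq 0 = init ∧
      ∀ T, seq (T + 1) = next (seq T) (γ T) :=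
    ⟨fun T => Nat.rec init (fun T s => next s (γ T)) T, rfl, fun _ => rfl⟩
  have hvalid : ∀ T, (seq T).Valid B C0 C1 ∧ (seq T).n = T := by
    intro T
    induction T with
    | zero => exact hseq₀ ▸ ⟨valid_init, rfl⟩
    | succ T ih =>
      obtain ⟨h, -, hn, -⟩ := hnext (seq T) (γ T) ih.1
      exact hseq T ▸ ⟨h, hn.trans (congrArg (· + 1) ih.2)⟩
  refine exists_syndetic_of_seq (fun T => (hvalid T).1) (fun T => (hvalid T).2)
    (fun T => hseq T ▸ (hnext _ _ (hvalid T).1).2.1) fun x => ?_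
  obtain ⟨i, rfl⟩ := hγ x
  have h := (hnext (seq i) (γ i) (hvalid i).1).2.2.2
  rw [← hseq, (hvalid (i + 1)).2] at h
  exact ⟨i + 1, h⟩

theorem SmallSet.exists_syndetic_finite_patterns {G : Type*} [Group G] [Countable G] {B : Set G}
    (hB : SmallSet B) :
    ∃ ω : G → Bool, ∀ C₀ C₁ : Set G, C₀.Finite → C₁.Finite → C₀ ⊆ B → C₁ ⊆ B →
      Disjoint C₀ C₁ → Syndetic {g : G | g • ω ∈ cylinder C₀ C₁} := by
  let A : Set (Set G × Set G) :=
    {p | p.1.Finite ∧ p.2.Finite ∧ p.1 ⊆ B ∧ p.2 ⊆ B ∧ Disjoint p.1 p.2}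
  have hAc : A.Countable := by
    refine (countable_range fun q : Finset G × Finset G => ((q.1 : Set G), (q.2 : Set G))).mono ?_
    rintro ⟨C₀, C₁⟩ ⟨h₀, h₁, -⟩
    exact ⟨(h₀.toFinset, h₁.toFinset), by simp⟩
  obtain ⟨p, hp⟩ := hAc.exists_eq_range ⟨(∅, ∅), by simp [A]⟩
  have hpA : ∀ m, p m ∈ A := fun m => hp ▸ mem_range_self m
  obtain ⟨ω, hω⟩ := hB.exists_syndetic_occurrences_seq (fun m => ((hpA m).1.union (hpA m).2.1))
    (fun m => union_subset (hpA m).2.2.1 (hpA m).2.2.2.1) (fun m => (hpA m).2.2.2.2)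
  refine ⟨ω, fun C₀ C₁ h₀ h₁ hB₀ hB₁ hdisj => ?_⟩
  obtain ⟨m, hm⟩ : (C₀, C₁) ∈ range p := hp ▸ ⟨h₀, h₁, hB₀, hB₁, hdisj⟩
  simpa only [hm] using hω m

theorem small_set_shattered_by_minimal_subshift_general
    (G : Type*) [Group G] [Countable G]
    (B : Set G) (hB : SmallSet B) :
    ∃ X : Set (G → Bool), IsClosed X ∧ (∀ (g : G), ∀ x ∈ X, g • x ∈ X) ∧
      X.Nonempty ∧ (∀ x ∈ X, closure (MulAction.orbit G x) = X) ∧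
      ∀ C : Set G, C ⊆ B → ∃ x ∈ X,
        (∀ g ∈ C, x g = true) ∧ (∀ g ∈ B \ C, x g = false) := by
  obtain ⟨ω, hω⟩ := hB.exists_syndetic_finite_patterns
  obtain ⟨X, hXω, hXcl, hXinv, hXne, hXmin⟩ :=
    exists_minimal_invariant_subset (G := G) isClosed_closure
      (fun g _ hy => smul_closure_orbit_subset g ω (smul_mem_smul_set hy))
      ⟨ω, subset_closure (MulAction.mem_orbit_self ω)⟩
  refine ⟨X, hXcl, hXinv, hXne, hXmin, fun C hC => ?_⟩
  obtain ⟨x, hxX, hx⟩ := inter_cylinder_nonempty hXcl fun D₀ hD₀ D₁ hD₁ h₀ h₁ =>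
    inter_nonempty_of_syndetic (isClosed_cylinder D₀ D₁)
      (hω D₀ D₁ h₀ h₁ (hD₀.trans hC) (hD₁.trans sdiff_subset)
        (disjoint_of_subset hD₀ hD₁ disjoint_sdiff_right)) hXinv hXω hXne
  exact ⟨x, hxX, hx⟩

/-- Let `G` be a countable, infinite discrete group and `B ⊆ G` a small
set.  Then there exists a minimal subshift `X ⊆ 2^G` that shatters `B`: for every `C ⊆ B`
there is `x ∈ X` with `x = 1` on `C` and `x = 0` on `B \ C`. -/
theorem small_set_shattered_by_minimal_subshift
    (G : Type*) [Group G] [Countable G] [Infinite G]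
    (B : Set G) (hB : SmallSet B) :
    ∃ X : Set (G → Bool), IsClosed X ∧ (∀ (g : G), ∀ x ∈ X, g • x ∈ X) ∧
      X.Nonempty ∧ (∀ x ∈ X, closure (MulAction.orbit G x) = X) ∧
      ∀ C : Set G, C ⊆ B → ∃ x ∈ X,
        (∀ g ∈ C, x g = true) ∧ (∀ g ∈ B \ C, x g = false) :=
  small_set_shattered_by_minimal_subshift_general G B hB
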